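/- Let C be a category, e ≥ 0, n ≥ 1, and let A be the pseudometric space on Fin n with d(i,j) = 2e for i ≠ j and d(i,i) = 0. Suppose given functors U_i : ℝ ⥤ C for i ∈ Fin n and, for each pair i ≠ j, a family of morphisms Φ_ij(s) : U_i(s) → U_j(s+2e), natural in s, such that for all s ∈ ℝ: (1) Φ_ji(s+2e) ∘ Φ_ij(s) = U_i applied to (s ≤ s+4e) for all distinct i, j; and (2) Φ_jk(s+2e) ∘ Φ_ij(s) = (U_k applied to (s+2e ≤ s+4e)) ∘ Φ_ik(s) for all pairwise distinct i, j, k. Then there exists a functor G : spacetime(A) ⥤ C such that for every i ∈ Fin n, the composite G ∘ η(i) is naturally isomorphic to U_i. -/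

import Mathlib

open CategoryTheory CategoryTheory.Limits

noncomputable section

/-- Translation functor `T_e : a ↦ a + e` on `ℝ`, viewed as a preorder category. -/
def Tr (e : ℝ) : ℝ ⥤ ℝ :=
  Monotone.functor (f := fun a : ℝ => a + e) (fun _ _ h => (add_le_add_iff_right e).mpr h)

@[simp] theorem Tr_obj (e a : ℝ) : (Tr e).obj a = a + e := rfl

theorem Tr_comp (e f : ℝ) : Tr e ⋙ Tr f = Tr (e + f) :=
  CategoryTheory.Functor.ext (fun a => add_assoc a e f) (fun _ _ _ => Subsingleton.elim _ _)

/-- The canonical natural transformation `U σ_e : U ⟶ U T_e` for `0 ≤ e`,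
whose component at `a` is `U` applied to `a ≤ a + e`. -/
def sigmaNat {C : Type*} [Category C] (U : ℝ ⥤ C) (e : ℝ) (he : 0 ≤ e) :
    U ⟶ Tr e ⋙ U where
  app a := U.map (homOfLE (le_add_of_nonneg_right he))
  naturality a b f := by
    dsimp [Tr]
    rw [← Functor.map_comp, ← Functor.map_comp]
    exact congrArg U.map (Subsingleton.elim _ _)

/-- `(Φ, Ψ)` is an `e`-interleaving of `U` and `V`:
`(Ψ whiskered by T_e) ∘ Φ = U σ_{2e}` and `(Φ whiskered by T_e) ∘ Ψ = V σ_{2e}`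
(the `eqToHom` transports along the equality of functors `T_{2e} = T_e ⋙ T_e`). -/
def IsInterleaving {C : Type*} [Category C] (e : ℝ) (he : 0 ≤ e) (U V : ℝ ⥤ C)
    (Φ : U ⟶ Tr e ⋙ V) (Ψ : V ⟶ Tr e ⋙ U) : Prop :=
  Φ ≫ Functor.whiskerLeft (Tr e) Ψ =
      sigmaNat U (2 * e) (by linarith) ≫ eqToHom (by rw [two_mul, ← Tr_comp, Functor.assoc]) ∧
    Ψ ≫ Functor.whiskerLeft (Tr e) Φ =
      sigmaNat V (2 * e) (by linarith) ≫ eqToHom (by rw [two_mul, ← Tr_comp, Functor.assoc])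

/-- `U` and `V` are `e`-interleaved. -/
def Interleaved {C : Type*} [Category C] (e : ℝ) (U V : ℝ ⥤ C) : Prop :=
  ∃ (he : 0 ≤ e) (Φ : U ⟶ Tr e ⋙ V) (Ψ : V ⟶ Tr e ⋙ U), IsInterleaving e he U V Φ Ψ

/-- The interleaving distance: the infimum in `[0,∞]` of the set of `e ≥ 0` such that
`U` and `V` are `e`-interleaved (`∞` if this set is empty). -/
noncomputable def dInt {C : Type*} [Category C] (U V : ℝ ⥤ C) : ENNReal :=
  sInf (ENNReal.ofReal '' {e : ℝ | Interleaved e U V})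

/-- The spacetime of a pseudometric space `M`: the set `M × ℝ` (encoded as a structure
with a point component and a time component). -/
@[ext] structure Spacetime (M : Type*) [PseudoMetricSpace M] where
  pos : M
  time : ℝ

/-- The spacetime preorder: `(x,s) ≤ (y,t)` iff `dist x y ≤ t - s`. -/
instance Spacetime.instPreorder (M : Type*) [PseudoMetricSpace M] :
    Preorder (Spacetime M) where
  le p q := dist p.pos q.pos ≤ q.time - p.time
  le_refl p := by simp
  le_trans p q r h₁ h₂ := by
    have h := dist_triangle p.pos q.pos r.pos
    change dist p.pos q.pos ≤ q.time - p.time at h₁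
    change dist q.pos r.pos ≤ r.time - q.time at h₂
    show dist p.pos r.pos ≤ r.time - p.time
    linarith

theorem Spacetime.le_def {M : Type*} [PseudoMetricSpace M] (p q : Spacetime M) :
    p ≤ q ↔ dist p.pos q.pos ≤ q.time - p.time := Iff.rfl

/-- The constant world line `η(x) : ℝ ⥤ Spacetime M` of a point `x`, i.e. the functor
induced by the monotone map `s ↦ (x, s)`. -/
def eta {M : Type*} [PseudoMetricSpace M] (x : M) : ℝ ⥤ Spacetime M :=
  Monotone.functor (f := fun s : ℝ => (⟨x, s⟩ : Spacetime M))
    (fun a b h => show dist x x ≤ b - a by rw [dist_self]; linarith)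

/-!
The functor `G` sends `(i, s)` to `U_i(s)`. In `A`, a relation `(i, s) ≤ (j, t)` with `i ≠ j`
forces `s + 2e ≤ t`, and `G` sends it to `Φ_ij(s)` followed by `U_j(s + 2e ≤ t)`; a relation
with `i = j` goes to `U_i(s ≤ t)`. Functoriality is a case analysis on which of three
composable points share their position: naturality of `Φ` moves structure maps past `Φ`, after
which (1) or (2) collapses two consecutive `Φ`s into a single one or into a structure map.
Then `G ∘ η(i) = U_i` on the nose.
-/

theorem Spacetime.time_add_dist_le {M : Type*} [PseudoMetricSpace M] {p q : Spacetime M}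
    (h : p ≤ q) : p.time + dist p.pos q.pos ≤ q.time := by
  rw [Spacetime.le_def] at h
  linarith

theorem Spacetime.time_le_of_le {M : Type*} [PseudoMetricSpace M] {p q : Spacetime M}
    (h : p ≤ q) : p.time ≤ q.time := by
  linarith [Spacetime.time_add_dist_le h, dist_nonneg (x := p.pos) (y := q.pos)]

namespace CategoryTheory.Functor

theorem map_homOfLE_comp {α C : Type*} [Preorder α] [Category C] (F : α ⥤ C)
    {a b c : α} (hab : a ≤ b) (hbc : b ≤ c) :
    F.map (homOfLE hab) ≫ F.map (homOfLE hbc) = F.map (homOfLE (hab.trans hbc)) := by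
  rw [← F.map_comp, homOfLE_comp]

theorem eqToHom_obj_eq_map_homOfLE {α C : Type*} [Preorder α] [Category C]
    (F : α ⥤ C) {a b : α} (h : a = b) :
    eqToHom (congrArg F.obj h) = F.map (homOfLE h.le) := by
  subst h
  rw [eqToHom_refl, ← F.map_id]
  rfl

end CategoryTheory.Functor

section Glue

variable {C : Type*} [Category C] {M : Type*} [PseudoMetricSpace M] {e : ℝ}
  (hsep : ∀ i j : M, i ≠ j → 2 * e ≤ dist i j)
  (U : M → ℝ ⥤ C)
  (Φ : ∀ i j : M, i ≠ j → ∀ s : ℝ, (U i).obj s ⟶ (U j).obj (s + 2 * e))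

include hsep in
theorem Spacetime.time_add_le_of_pos_ne {p q : Spacetime M} (h : p ≤ q) (hpq : p.pos ≠ q.pos) :
    p.time + 2 * e ≤ q.time := by
  linarith [Spacetime.time_add_dist_le h, hsep _ _ hpq]

variable [DecidableEq M]

def gluedMap {p q : Spacetime M} (h : p ≤ q) :
    (U p.pos).obj p.time ⟶ (U q.pos).obj q.time :=
  if hpq : p.pos = q.pos then
    (U p.pos).map (homOfLE (Spacetime.time_le_of_le h)) ≫ eqToHom (by rw [hpq])
  else
    Φ p.pos q.pos hpq p.time ≫
      (U q.pos).map (homOfLE (Spacetime.time_add_le_of_pos_ne hsep h hpq))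

theorem gluedMap_self {i : M} {s t : ℝ} (h : (⟨i, s⟩ : Spacetime M) ≤ ⟨i, t⟩) :
    gluedMap hsep U Φ h = (U i).map (homOfLE (Spacetime.time_le_of_le h)) := by
  rw [gluedMap, dif_pos rfl, eqToHom_refl, Category.comp_id]

theorem gluedMap_refl (p : Spacetime M) : gluedMap hsep U Φ (le_refl p) = 𝟙 _ := by
  rw [gluedMap, dif_pos rfl, eqToHom_refl, Category.comp_id]
  exact (U p.pos).map_id p.time

theorem gluedMap_of_ne {i j : M} {s t : ℝ} (h : (⟨i, s⟩ : Spacetime M) ≤ ⟨j, t⟩)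
    (hij : i ≠ j) :
    gluedMap hsep U Φ h =
      Φ i j hij s ≫ (U j).map (homOfLE (Spacetime.time_add_le_of_pos_ne hsep h hij)) := by
  rw [gluedMap, dif_neg hij]

variable (he : 0 ≤ e)
  (hnat : ∀ (i j : M) (h : i ≠ j) (s t : ℝ) (hst : s ≤ t),
    (U i).map (homOfLE hst) ≫ Φ i j h t =
      Φ i j h s ≫ (U j).map (homOfLE (show s + 2 * e ≤ t + 2 * e by linarith)))
  (h1 : ∀ (i j : M) (h : i ≠ j) (s : ℝ),
    Φ i j h s ≫ Φ j i h.symm (s + 2 * e) =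
      (U i).map (homOfLE (show s ≤ s + 2 * e + 2 * e by linarith)))
  (h2 : ∀ (i j k : M) (hij : i ≠ j) (hjk : j ≠ k) (hik : i ≠ k) (s : ℝ),
    Φ i j hij s ≫ Φ j k hjk (s + 2 * e) =
      Φ i k hik s ≫ (U k).map (homOfLE (show s + 2 * e ≤ s + 2 * e + 2 * e by linarith)))

include he hnat h1 h2 in
theorem gluedMap_comp {p q r : Spacetime M} (hpq : p ≤ q) (hqr : q ≤ r) :
    gluedMap hsep U Φ hpq ≫ gluedMap hsep U Φ hqr = gluedMap hsep U Φ (hpq.trans hqr) := by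
  obtain ⟨i, s⟩ := p
  obtain ⟨j, t⟩ := q
  obtain ⟨k, u⟩ := r
  by_cases hij : i = j
  · subst hij
    by_cases hik : i = k
    · subst hik
      simp only [gluedMap_self, Functor.map_homOfLE_comp]
    · simp only [gluedMap_self, gluedMap_of_ne _ _ _ _ hik]
      rw [reassoc_of% hnat i k hik s t, Functor.map_homOfLE_comp]
  by_cases hjk : j = k
  · subst hjk
    simp only [gluedMap_self, gluedMap_of_ne _ _ _ _ hij, Category.assoc,
      Functor.map_homOfLE_comp]
  simp only [gluedMap_of_ne _ _ _ _ hij, gluedMap_of_ne _ _ _ _ hjk, Category.assoc]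
  rw [reassoc_of% hnat j k hjk (s + 2 * e) t]
  by_cases hik : i = k
  · subst hik
    rw [reassoc_of% h1 i j hij s, gluedMap_self]
    simp only [Functor.map_homOfLE_comp]
  · rw [reassoc_of% h2 i j k hij hjk hik s, gluedMap_of_ne _ _ _ _ hik]
    simp only [Functor.map_homOfLE_comp]

def gluedFunctor : Spacetime M ⥤ C where
  obj p := (U p.pos).obj p.time
  map f := gluedMap hsep U Φ (leOfHom f)
  map_id p := gluedMap_refl hsep U Φ p
  map_comp f g := (gluedMap_comp hsep U Φ he hnat h1 h2 (leOfHom f) (leOfHom g)).symm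

def etaCompGluedFunctorIso (i : M) : eta i ⋙ gluedFunctor hsep U Φ he hnat h1 h2 ≅ U i :=
  NatIso.ofComponents (fun _ => Iso.refl _) fun f =>
    (Category.comp_id _).trans <|
      (gluedMap_self hsep U Φ (leOfHom ((eta i).map f))).trans (Category.id_comp _).symm

end Glue

/-- Conversely, let `A` be the pseudometric space on `Fin n` (`n ≥ 1`) with
`d(i,j) = 2e` for `i ≠ j`, and suppose given functors `U_i : ℝ ⥤ C` and families
`Φ_ij(s) : U_i(s) ⟶ U_j(s+2e)` (for `i ≠ j`), natural in `s`, satisfying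
(1) `Φ_ji(s+2e) ∘ Φ_ij(s) = U_i (s ≤ s+4e)` and
(2) `Φ_jk(s+2e) ∘ Φ_ij(s) = U_k (s+2e ≤ s+4e) ∘ Φ_ik(s)`
(the `eqToHom`s transport along `s + 4e = s + 2e + 2e`). Then there is a functor
`G : Spacetime A ⥤ C` with `G ∘ η(i) ≅ U_i` for every `i`. -/
theorem coherent_of_compatible_family {C : Type*} [Category C] (n : ℕ)
    (e : ℝ) (he : 0 ≤ e) [PseudoMetricSpace (Fin n)]
    (hd : ∀ i j : Fin n, dist i j = if i = j then 0 else 2 * e)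
    (U : Fin n → ℝ ⥤ C)
    (Φ : ∀ i j : Fin n, i ≠ j → ∀ s : ℝ, ((U i).obj s ⟶ (U j).obj (s + 2 * e)))
    (hnat : ∀ (i j : Fin n) (h : i ≠ j) (s t : ℝ) (hst : s ≤ t),
      (U i).map (homOfLE hst) ≫ Φ i j h t =
        Φ i j h s ≫ (U j).map (homOfLE (show s + 2 * e ≤ t + 2 * e by linarith)))
    (h1 : ∀ (i j : Fin n) (h : i ≠ j) (s : ℝ),
      Φ i j h s ≫ Φ j i h.symm (s + 2 * e) =
        (U i).map (homOfLE (show s ≤ s + 4 * e by linarith)) ≫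
          eqToHom (congrArg (U i).obj (by ring : s + 4 * e = s + 2 * e + 2 * e)))
    (h2 : ∀ (i j k : Fin n) (hij : i ≠ j) (hjk : j ≠ k) (hik : i ≠ k) (s : ℝ),
      Φ i j hij s ≫ Φ j k hjk (s + 2 * e) =
        Φ i k hik s ≫ (U k).map (homOfLE (show s + 2 * e ≤ s + 4 * e by linarith)) ≫
          eqToHom (congrArg (U k).obj (by ring : s + 4 * e = s + 2 * e + 2 * e))) :
    ∃ G : Spacetime (Fin n) ⥤ C, ∀ i : Fin n, Nonempty (eta i ⋙ G ≅ U i) := by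
  have hsep : ∀ i j : Fin n, i ≠ j → 2 * e ≤ dist i j := fun i j hij => by
    rw [hd, if_neg hij]
  refine ⟨gluedFunctor hsep U Φ he hnat (fun i j h s => ?_) (fun i j k hij hjk hik s => ?_),
    fun i => ⟨etaCompGluedFunctorIso hsep U Φ he hnat _ _ i⟩⟩
  · rw [h1, Functor.eqToHom_obj_eq_map_homOfLE _ (by ring), Functor.map_homOfLE_comp]
  · rw [h2, Functor.eqToHom_obj_eq_map_homOfLE _ (by ring), Functor.map_homOfLE_comp]

end
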